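/- arXiv:2509.19748 — 4 statements merged into one kernel-verified Lean document; each statement's English description precedes it below -/
import Mathlib

section
/- Small-ball probability for a first-order Gaussian random walk (Lemma S.1). Let w₂,…,w_m be i.i.d. standard normal random variables, let σ > 0, and define x_t = σ(w₂ + ⋯ + w_t) for t = 2,…,m (a first-order Gaussian random walk with transition variance σ² started at 0). Then for every δ > 0, P( max_{2≤t≤m} |x_t| ≤ δ ) ≥ exp(−C m σ²/δ²), where C = 2(1 + 3e√(2π))². -/
open MeasureTheory ProbabilityTheory Finset

namespace GRWSB

open Real Set
open scoped NNReal ENNReal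


lemma integrable_cos_mul_pdf (x : ℝ) (v : ℝ≥0) (t : ℝ) :
    Integrable (fun z : ℝ => Real.cos (t * z) * gaussianPDFReal x v z) := by
  refine (integrable_gaussianPDFReal x v).mono ?_ (ae_of_all _ fun z => ?_)
  · exact ((Real.continuous_cos.comp (continuous_const.mul continuous_id)).measurable.mul
      (measurable_gaussianPDFReal x v)).aestronglyMeasurable
  · rw [Real.norm_eq_abs, Real.norm_eq_abs, abs_mul]
    calc |Real.cos (t * z)| * |gaussianPDFReal x v z| ≤ 1 * |gaussianPDFReal x v z| := by
          gcongr; exact Real.abs_cos_le_one _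
      _ = |gaussianPDFReal x v z| := one_mul _

lemma fourier_cos (x : ℝ) {v : ℝ≥0} (hv : v ≠ 0) (t : ℝ) :
    ∫ z : ℝ, Real.cos (t * z) * gaussianPDFReal x v z
      = Real.exp (-(v : ℝ) * t ^ 2 / 2) * Real.cos (t * x) := by
  have hv0 : (0 : ℝ) < (v : ℝ) := by
    have : 0 < v := pos_iff_ne_zero.mpr hv
    exact_mod_cast this
  set b : ℂ := ((-(1 / (2 * (v : ℝ))) : ℝ) : ℂ) with hb_def
  have hbre : b.re < 0 := by
    rw [hb_def, Complex.ofReal_re]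
    exact neg_lt_zero.mpr (by positivity)
  set c : ℂ := Complex.ofReal (x / (v:ℝ)) + t * Complex.I with hc_def
  set d : ℂ := Complex.ofReal (-(x ^ 2 / (2 * (v:ℝ)))) with hd_def
  have key := integral_cexp_quadratic hbre c d
  have hint := integrable_cexp_quadratic' hbre c d
  have hpt : ∀ z : ℝ, (Complex.exp (b * z ^ 2 + c * z + d)).re
      = Real.exp (-(z - x) ^ 2 / (2 * v)) * Real.cos (t * z) := by
    intro z
    have : b * z ^ 2 + c * z + d = ((-(z - x) ^ 2 / (2 * v) : ℝ) : ℂ) + ((t * z : ℝ) : ℂ) * Complex.I := by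
      rw [hb_def, hc_def, hd_def]
      push_cast
      field_simp
      ring
    rw [this, Complex.exp_add, ← Complex.ofReal_exp, Complex.re_ofReal_mul,
      Complex.exp_ofReal_mul_I_re]
  have hswap : (∫ z : ℝ, Complex.exp (b * z ^ 2 + c * z + d)).re
      = ∫ z : ℝ, (Complex.exp (b * z ^ 2 + c * z + d)).re := by
    have h := integral_re hint
    simp only [RCLike.re_eq_complex_re] at h
    exact h.symm
  have hre : ∫ z : ℝ, Real.cos (t * z) * gaussianPDFReal x v z
      = (√(2 * π * v))⁻¹ * (∫ z : ℝ, Complex.exp (b * z ^ 2 + c * z + d)).re := by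
    rw [hswap, ← integral_const_mul]
    congr 1 with z
    rw [hpt z, gaussianPDFReal]
    ring
  -- compute RHS of key
  have hπb : (↑π / -b) = ((2 * π * v : ℝ) : ℂ) := by
    rw [hb_def]
    push_cast
    field_simp
  have hcpow : (↑π / -b) ^ (1 / 2 : ℂ) = ((√(2 * π * v) : ℝ) : ℂ) := by
    rw [hπb, Real.sqrt_eq_rpow, Complex.ofReal_cpow (by positivity)]
    norm_num
  have hdc : d - c ^ 2 / (4 * b) = ((-(v : ℝ) * t ^ 2 / 2 : ℝ) : ℂ) + ((t * x : ℝ) : ℂ) * Complex.I := by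
    rw [hb_def, hc_def, hd_def]
    have hvc : ((v : ℝ) : ℂ) ≠ 0 := by exact_mod_cast hv0.ne'
    push_cast
    field_simp
    ring_nf
    try simp only [Complex.I_sq]
    try ring_nf
    try ring
  rw [hre, key, hcpow, hdc]
  rw [Complex.exp_add, ← Complex.ofReal_exp, ← mul_assoc, ← Complex.ofReal_mul,
    Complex.re_ofReal_mul, Complex.exp_ofReal_mul_I_re]
  have hsqrt : (√(2 * π * v)) ≠ 0 := by positivity
  field_simp


lemma pdf_anti {x z z' : ℝ} (v : ℝ≥0) (hxz : x ≤ z) (hzz' : z ≤ z') :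
    gaussianPDFReal x v z' ≤ gaussianPDFReal x v z := by
  unfold gaussianPDFReal
  have h1 : (0:ℝ) ≤ (√(2 * π * v))⁻¹ := by positivity
  refine mul_le_mul_of_nonneg_left (Real.exp_le_exp.mpr ?_) h1
  have hsq : (z - x)^2 ≤ (z' - x)^2 := by nlinarith
  have h2v : (0:ℝ) ≤ 2 * v := by positivity
  have h3 := div_le_div_of_nonneg_right hsq h2v
  rw [neg_div, neg_div]
  linarith


section Tail

variable {v : ℝ≥0} {δ : ℝ}

lemma block_nonpos (hv : v ≠ 0) (hδ : 0 < δ) {x : ℝ} (hx : x ≤ δ) (k : ℕ) :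
    ∫ z in Set.Ioc (δ + 4*δ*k) (δ + 4*δ*(k+1)), Real.cos (π/(2*δ) * z) * gaussianPDFReal x v z ≤ 0 := by
  set c : ℝ := π/(2*δ) with hc_def
  set F : ℝ → ℝ := fun z => Real.cos (c * z) * gaussianPDFReal x v z with hF_def
  set u : ℝ := δ + 4*δ*k with hu_def
  have hu : δ ≤ u := by
    have : (0:ℝ) ≤ 4*δ*k := by positivity
    linarith
  have hFi : Integrable F := integrable_cos_mul_pdf x v c
  have hend : δ + 4*δ*((k:ℝ)+1) = u + 4*δ := by rw [hu_def]; ring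
  have hc2 : c * (2*δ) = π := by rw [hc_def]; field_simp
  have hcpos : 0 < c := by rw [hc_def]; positivity
  clear_value c F u
  have h1 : ∫ z in Set.Ioc u (u + 4*δ), F z = ∫ z in u..(u + 4*δ), F z := by
    rw [intervalIntegral.integral_of_le (by linarith)]
  have h2 : ∫ z in u..(u + 4*δ), F z
      = (∫ z in u..(u + 2*δ), F z) + ∫ z in (u + 2*δ)..(u + 4*δ), F z := by
    rw [intervalIntegral.integral_add_adjacent_intervals] <;> exact hFi.intervalIntegrable
  have h3 : ∫ z in (u + 2*δ)..(u + 4*δ), F z = ∫ z in u..(u + 2*δ), F (z + 2*δ) := by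
    rw [intervalIntegral.integral_comp_add_right F (2*δ)]
    congr 1 <;> ring
  have h4 : (∫ z in u..(u + 2*δ), F z) + ∫ z in u..(u + 2*δ), F (z + 2*δ)
      = ∫ z in u..(u + 2*δ), (F z + F (z + 2*δ)) := by
    rw [intervalIntegral.integral_add hFi.intervalIntegrable
      (hFi.comp_add_right (2*δ)).intervalIntegrable]
  have hpt : ∀ z ∈ Set.Icc u (u + 2*δ), F z + F (z + 2*δ) ≤ 0 := by
    intro z hz
    obtain ⟨hz1, hz2⟩ := hz
    have hcos2 : Real.cos (c * (z + 2*δ)) = - Real.cos (c * z) := by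
      rw [mul_add, hc2, Real.cos_add_pi]
    have hcosneg : Real.cos (c * z) ≤ 0 := by
      have hper : Real.cos (c * z) = Real.cos (c * z - k * (2 * π)) := by
        rw [Real.cos_sub_nat_mul_two_pi]
      rw [hper]
      apply Real.cos_nonpos_of_pi_div_two_le_of_le
      · have hczu : c * u ≤ c * z := by
          exact mul_le_mul_of_nonneg_left hz1 hcpos.le
        have hcu : c * u = π/2 + k * (2 * π) := by
          rw [hu_def, hc_def]; field_simp; ring
        linarith
      · have hczu : c * z ≤ c * (u + 2*δ) := by
          exact mul_le_mul_of_nonneg_left hz2 hcpos.le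
        have hcu : c * (u + 2*δ) = π/2 + π + k * (2 * π) := by
          rw [hu_def, hc_def]; field_simp; ring
        nlinarith
    have hpdf : gaussianPDFReal x v (z + 2*δ) ≤ gaussianPDFReal x v z :=
      pdf_anti v (by linarith) (by linarith)
    have : F z + F (z + 2*δ)
        = Real.cos (c * z) * (gaussianPDFReal x v z - gaussianPDFReal x v (z + 2*δ)) := by
      rw [hF_def]; simp only []; rw [hcos2]; ring
    rw [this]
    exact mul_nonpos_of_nonpos_of_nonneg hcosneg (by linarith)
  have h5 : ∫ z in u..(u + 2*δ), (F z + F (z + 2*δ)) ≤ 0 := by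
    have hneg : 0 ≤ ∫ z in u..(u + 2*δ), -(F z + F (z + 2*δ)) :=
      intervalIntegral.integral_nonneg (by linarith : u ≤ u + 2*δ) (fun z hz => by
        show (0:ℝ) ≤ -(F z + F (z + 2*δ))
        linarith [hpt z hz])
    rw [intervalIntegral.integral_neg] at hneg
    linarith
  rw [hend, h1, h2, h3, h4]
  exact h5

lemma Ioi_decomp (hδ : 0 < δ) : Set.Ioi δ = ⋃ k : ℕ, Set.Ioc (δ + 4*δ*k) (δ + 4*δ*(k+1)) := by
  ext z
  simp only [Set.mem_Ioi, Set.mem_iUnion, Set.mem_Ioc]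
  constructor
  · intro hz
    have h4δ : (0:ℝ) < 4*δ := by linarith
    have hpos : 0 < (z - δ)/(4*δ) := div_pos (by linarith) h4δ
    set K : ℕ := ⌈(z - δ)/(4*δ)⌉₊ with hK_def
    have hK1 : 1 ≤ K := Nat.one_le_ceil_iff.mpr hpos
    refine ⟨K - 1, ?_, ?_⟩
    · have hlt : ((K:ℝ) - 1) < (z - δ)/(4*δ) := by
        have := Nat.ceil_lt_add_one hpos.le
        rw [← hK_def] at this
        linarith
      rw [Nat.cast_sub hK1, Nat.cast_one]
      have := (lt_div_iff₀ h4δ).mp hlt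
      linarith
    · have hle : (z - δ)/(4*δ) ≤ (K:ℝ) := Nat.le_ceil _
      have := (div_le_iff₀ h4δ).mp hle
      rw [Nat.cast_sub hK1, Nat.cast_one]
      linarith
  · rintro ⟨k, h1, -⟩
    have : (0:ℝ) ≤ 4*δ*k := by positivity
    linarith

lemma tail_Ioi_nonpos (hv : v ≠ 0) (hδ : 0 < δ) {x : ℝ} (hx : x ≤ δ) :
    ∫ z in Set.Ioi δ, Real.cos (π/(2*δ) * z) * gaussianPDFReal x v z ≤ 0 := by
  set c : ℝ := π/(2*δ) with hc_def
  set F : ℝ → ℝ := fun z => Real.cos (c * z) * gaussianPDFReal x v z with hF_def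
  have hFi : Integrable F := integrable_cos_mul_pdf x v c
  rw [Ioi_decomp hδ]
  rw [integral_iUnion (fun k => measurableSet_Ioc)
    ?_ hFi.integrableOn]
  · exact tsum_nonpos (fun k => block_nonpos hv hδ hx k)
  · intro i j hij
    simp only [Function.onFun]
    rw [Set.Ioc_disjoint_Ioc]
    rcases (Ne.lt_or_gt hij) with h | h
    · have : (i:ℝ) + 1 ≤ j := by exact_mod_cast h
      refine le_trans (min_le_left _ _) (le_trans ?_ (le_max_right _ _))
      have : (0:ℝ) < δ := hδ
      nlinarith
    · have : (j:ℝ) + 1 ≤ i := by exact_mod_cast h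
      refine le_trans (min_le_right _ _) (le_trans ?_ (le_max_left _ _))
      nlinarith

lemma tail_Iio_nonpos (hv : v ≠ 0) (hδ : 0 < δ) {x : ℝ} (hx : -δ ≤ x) :
    ∫ z in Set.Iio (-δ), Real.cos (π/(2*δ) * z) * gaussianPDFReal x v z ≤ 0 := by
  set c : ℝ := π/(2*δ) with hc_def
  have hkey : ∫ z in Set.Iio (-δ), Real.cos (c * z) * gaussianPDFReal x v z
      = ∫ z in Set.Ioi δ, Real.cos (c * z) * gaussianPDFReal (-x) v z := by
    rw [← integral_indicator measurableSet_Iio, ← integral_indicator measurableSet_Ioi]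
    rw [← integral_neg_eq_self]
    congr 1 with z
    by_cases hz : δ < z
    · rw [Set.indicator_of_mem (Set.mem_Iio.mpr (by linarith : -z < -δ)),
        Set.indicator_of_mem (Set.mem_Ioi.mpr hz)]
      have h1 : Real.cos (c * -z) = Real.cos (c * z) := by
        rw [mul_neg, Real.cos_neg]
      have h2 : gaussianPDFReal x v (-z) = gaussianPDFReal (-x) v z := by
        unfold gaussianPDFReal
        congr 2
        ring
      rw [h1, h2]
    · rw [Set.indicator_of_notMem (by simpa using hz), Set.indicator_of_notMem (by simpa using hz)]
  rw [hkey]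
  exact tail_Ioi_nonpos hv hδ (by linarith)

end Tail

section Core

variable {v : ℝ≥0} {δ : ℝ}

lemma core_lebesgue (hv : v ≠ 0) (hδ : 0 < δ) {x : ℝ} (hx : |x| ≤ δ) :
    Real.exp (-(v:ℝ) * (π/(2*δ))^2 / 2) * Real.cos (π/(2*δ) * x)
      ≤ ∫ z in Set.Icc (-δ) δ, Real.cos (π/(2*δ) * z) * gaussianPDFReal x v z := by
  set c : ℝ := π/(2*δ) with hc_def
  set F : ℝ → ℝ := fun z => Real.cos (c * z) * gaussianPDFReal x v z with hF_def
  have hFi : Integrable F := integrable_cos_mul_pdf x v c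
  obtain ⟨hx1, hx2⟩ := abs_le.mp hx
  have e1 : ∫ z in Set.Icc (-δ) δ ∪ Set.Ioi δ, F z
      = (∫ z in Set.Icc (-δ) δ, F z) + ∫ z in Set.Ioi δ, F z := by
    apply setIntegral_union ?_ measurableSet_Ioi hFi.integrableOn hFi.integrableOn
    rw [Set.disjoint_left]
    rintro z ⟨-, hz2⟩ hz3
    exact absurd hz3 (not_lt.mpr hz2)
  rw [Set.Icc_union_Ioi_eq_Ici (by linarith)] at e1
  have e2 : ∫ z in Set.Iio (-δ) ∪ Set.Ici (-δ), F z
      = (∫ z in Set.Iio (-δ), F z) + ∫ z in Set.Ici (-δ), F z := by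
    apply setIntegral_union ?_ measurableSet_Ici hFi.integrableOn hFi.integrableOn
    rw [Set.disjoint_left]
    rintro z hz1 hz2
    exact absurd (Set.mem_Ici.mp hz2) (not_le.mpr (Set.mem_Iio.mp hz1))
  rw [Set.Iio_union_Ici] at e2
  have e3 : ∫ z, F z = ∫ z in Set.univ, F z := setIntegral_univ.symm
  have e4 : ∫ z, F z = Real.exp (-(v:ℝ) * c^2 / 2) * Real.cos (c * x) := fourier_cos x hv c
  have t1 := tail_Ioi_nonpos hv hδ hx2
  have t2 := tail_Iio_nonpos hv hδ hx1
  rw [← hc_def] at t1 t2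
  rw [← hF_def] at t1 t2
  linarith [e1, e2, e3, e4, t1, t2]

lemma core_gauss (hv : v ≠ 0) (hδ : 0 < δ) {x : ℝ} (hx : |x| ≤ δ) :
    Real.exp (-(v:ℝ) * (π/(2*δ))^2 / 2) * Real.cos (π/(2*δ) * x)
      ≤ ∫ a in {a : ℝ | |x + a| ≤ δ}, Real.cos (π/(2*δ) * (x + a)) ∂(gaussianReal 0 v) := by
  set c : ℝ := π/(2*δ) with hc_def
  have hA : {a : ℝ | |x + a| ≤ δ} = Set.Icc (-δ - x) (δ - x) := by
    ext a
    simp only [Set.mem_setOf_eq, Set.mem_Icc, abs_le]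
    constructor <;> rintro ⟨h1, h2⟩ <;> constructor <;> linarith
  rw [gaussianReal_of_var_ne_zero 0 hv, hA]
  have hwd : (volume.withDensity (gaussianPDF 0 v))
      = volume.withDensity (fun a => ((gaussianPDFReal 0 v a).toNNReal : ℝ≥0∞)) := rfl
  rw [hwd, setIntegral_withDensity_eq_setIntegral_smul
    (measurable_gaussianPDFReal 0 v).real_toNNReal _ measurableSet_Icc]
  have hsmul : ∀ a : ℝ, (gaussianPDFReal 0 v a).toNNReal • Real.cos (c * (x + a))
      = gaussianPDFReal 0 v a * Real.cos (c * (x + a)) := fun a => by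
    rw [NNReal.smul_def, Real.coe_toNNReal _ (gaussianPDFReal_nonneg 0 v _), smul_eq_mul]
  simp_rw [hsmul]
  have htrans : ∫ a in Set.Icc (-δ - x) (δ - x), gaussianPDFReal 0 v a * Real.cos (c * (x + a))
      = ∫ z in Set.Icc (-δ) δ, Real.cos (c * z) * gaussianPDFReal x v z := by
    rw [← integral_indicator measurableSet_Icc, ← integral_indicator measurableSet_Icc]
    rw [← integral_add_right_eq_self
      (fun z => (Set.Icc (-δ) δ).indicator (fun z => Real.cos (c * z) * gaussianPDFReal x v z) z) x]
    congr 1 with a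
    by_cases ha : a ∈ Set.Icc (-δ - x) (δ - x)
    · obtain ⟨h1, h2⟩ := ha
      rw [Set.indicator_of_mem (by constructor <;> linarith : a + x ∈ Set.Icc (-δ) δ),
        Set.indicator_of_mem (by constructor <;> linarith : a ∈ Set.Icc (-δ - x) (δ - x))]
      have hpdf : gaussianPDFReal x v (a + x) = gaussianPDFReal 0 v a := by
        unfold gaussianPDFReal
        congr 2
        ring
      rw [hpdf]
      ring_nf
    · have ha' : a + x ∉ Set.Icc (-δ) δ := by
        simp only [Set.mem_Icc, not_and_or, not_le] at ha ⊢
        rcases ha with h | h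
        · left; linarith
        · right; linarith
      rw [Set.indicator_of_notMem ha', Set.indicator_of_notMem ha]
  rw [htrans]
  exact core_lebesgue hv hδ hx

end Core

section Walk

variable {v : ℝ≥0} {δ : ℝ}

lemma sum_filter_zero {n : ℕ} (w : Fin (n+1) → ℝ) :
    ∑ s ∈ univ.filter (fun s : Fin (n+1) => s ≤ 0), w s = w 0 := by
  rw [Finset.sum_filter, Fin.sum_univ_succ]
  simp [Fin.le_zero_iff, Fin.succ_ne_zero]

lemma sum_filter_succ {n : ℕ} (w : Fin (n+1) → ℝ) (t : Fin n) :
    ∑ s ∈ univ.filter (fun s : Fin (n+1) => s ≤ t.succ), w s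
      = w 0 + ∑ s ∈ univ.filter (fun s : Fin n => s ≤ t), w s.succ := by
  rw [Finset.sum_filter, Finset.sum_filter, Fin.sum_univ_succ]
  simp [Fin.succ_le_succ_iff, Fin.zero_le]

lemma walk_bound (hv : v ≠ 0) (hδ : 0 < δ) :
    ∀ (n : ℕ) (x : ℝ), |x| ≤ δ →
    ENNReal.ofReal (Real.exp (-(v:ℝ) * (π/(2*δ))^2 / 2) ^ n * Real.cos (π/(2*δ) * x))
      ≤ (Measure.pi fun _ : Fin n => gaussianReal 0 v)
          {w | ∀ t : Fin n, |x + ∑ s ∈ univ.filter (fun s : Fin n => s ≤ t), w s| ≤ δ} := by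
  intro n
  induction n with
  | zero =>
    intro x hx
    have huniv : {w : Fin 0 → ℝ | ∀ t : Fin 0,
        |x + ∑ s ∈ univ.filter (fun s : Fin 0 => s ≤ t), w s| ≤ δ} = Set.univ :=
      Set.eq_univ_of_forall (fun w t => t.elim0)
    rw [huniv, measure_univ]
    refine ENNReal.ofReal_le_one.mpr ?_
    rw [pow_zero, one_mul]
    exact Real.cos_le_one _
  | succ n ih =>
    intro x hx
    set γ := gaussianReal 0 v with hγ_def
    set c : ℝ := π/(2*δ) with hc_def
    set q : ℝ := Real.exp (-(v:ℝ) * c^2 / 2) with hq_def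
    have hq0 : 0 ≤ q := Real.exp_nonneg _
    set S : Set (ℝ × (Fin n → ℝ)) := {p | |x + p.1| ≤ δ ∧ ∀ t : Fin n,
      |(x + p.1) + ∑ s ∈ univ.filter (fun s : Fin n => s ≤ t), p.2 s| ≤ δ} with hS_def
    have hSmeas : MeasurableSet S := by
      apply MeasurableSet.inter
      · exact measurableSet_le ((measurable_const.add measurable_fst).abs) measurable_const
      · show MeasurableSet {p : ℝ × (Fin n → ℝ) | ∀ t : Fin n,
          |x + p.1 + ∑ s ∈ univ.filter (fun s : Fin n => s ≤ t), p.2 s| ≤ δ}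
        rw [Set.setOf_forall]
        apply MeasurableSet.iInter
        intro t
        apply measurableSet_le ?_ measurable_const
        apply Measurable.abs
        apply Measurable.add (measurable_const.add measurable_fst)
        exact Finset.measurable_sum _ (fun s _ => (measurable_pi_apply s).comp measurable_snd)
    have hevent : {w : Fin (n+1) → ℝ | ∀ t : Fin (n+1),
        |x + ∑ s ∈ univ.filter (fun s : Fin (n+1) => s ≤ t), w s| ≤ δ}
        = (MeasurableEquiv.piFinSuccAbove (fun _ : Fin (n+1) => ℝ) 0) ⁻¹' S := by
      ext w
      have happ : (MeasurableEquiv.piFinSuccAbove (fun _ : Fin (n+1) => ℝ) 0) w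
          = (w 0, fun j : Fin n => w (Fin.succAbove 0 j)) := rfl
      rw [Set.mem_preimage, happ]
      simp only [hS_def, Set.mem_setOf_eq, Fin.zero_succAbove]
      rw [Fin.forall_fin_succ]
      apply and_congr
      · rw [sum_filter_zero w]
      · apply forall_congr'
        intro t
        rw [sum_filter_succ w t, add_assoc]
    have hMP := measurePreserving_piFinSuccAbove (fun _ : Fin (n+1) => γ) 0
    rw [hevent, hMP.measure_preimage hSmeas.nullMeasurableSet]
    rw [Measure.prod_apply hSmeas]
    set A : Set ℝ := {a | |x + a| ≤ δ} with hA_def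
    have hAmeas : MeasurableSet A :=
      measurableSet_le ((measurable_const.add measurable_id).abs) measurable_const
    have hstep : ∀ a : ℝ,
        A.indicator (fun a => ENNReal.ofReal (q ^ n * Real.cos (c * (x + a)))) a
          ≤ (Measure.pi fun _ : Fin n => γ) (Prod.mk a ⁻¹' S) := by
      intro a
      by_cases ha : a ∈ A
      · rw [Set.indicator_of_mem ha]
        have hxa : |x + a| ≤ δ := ha
        have hpre : Prod.mk a ⁻¹' S = {u : Fin n → ℝ | ∀ t : Fin n,
            |(x + a) + ∑ s ∈ univ.filter (fun s : Fin n => s ≤ t), u s| ≤ δ} := by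
          ext u
          simp only [Set.mem_preimage, hS_def, Set.mem_setOf_eq, hxa, true_and]
        rw [hpre]
        exact ih (x + a) hxa
      · rw [Set.indicator_of_notMem ha]
        exact zero_le
    have hIntOn : IntegrableOn (fun a => q ^ n * Real.cos (c * (x + a))) A γ := by
      apply Integrable.integrableOn
      apply Integrable.const_mul
      refine Integrable.mono (integrable_const (1:ℝ)) ?_ (ae_of_all _ fun a => ?_)
      · exact (Real.continuous_cos.comp
          (continuous_const.mul (continuous_const.add continuous_id))).measurable.aestronglyMeasurable
      · rw [Real.norm_eq_abs, norm_one]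
        exact Real.abs_cos_le_one _
    have hae : 0 ≤ᵐ[γ.restrict A] (fun a => q ^ n * Real.cos (c * (x + a))) := by
      refine (ae_restrict_iff' hAmeas).2 (ae_of_all _ fun a ha => ?_)
      have hxa : |x + a| ≤ δ := ha
      have hcδ : c * δ = π/2 := by rw [hc_def]; field_simp
      have hcpos : (0:ℝ) ≤ c := by rw [hc_def]; positivity
      have hcos : 0 ≤ Real.cos (c * (x + a)) := by
        apply Real.cos_nonneg_of_mem_Icc
        rw [abs_le] at hxa
        constructor
        · have h2 : c * (-δ) ≤ c * (x + a) := mul_le_mul_of_nonneg_left hxa.1 hcpos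
          have h3 : c * (-δ) = -(π/2) := by rw [mul_neg, hcδ]
          linarith
        · have h2 : c * (x + a) ≤ c * δ := mul_le_mul_of_nonneg_left hxa.2 hcpos
          linarith
      positivity
    calc ENNReal.ofReal (q ^ (n+1) * Real.cos (c * x))
        ≤ ENNReal.ofReal (∫ a in A, q ^ n * Real.cos (c * (x + a)) ∂γ) := by
          apply ENNReal.ofReal_le_ofReal
          rw [integral_const_mul]
          have hcore := core_gauss hv hδ hx
          rw [← hc_def, ← hq_def, ← hA_def, ← hγ_def] at hcore
          calc q ^ (n+1) * Real.cos (c * x) = q ^ n * (q * Real.cos (c * x)) := by ring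
            _ ≤ q ^ n * ∫ a in A, Real.cos (c * (x + a)) ∂γ :=
                mul_le_mul_of_nonneg_left hcore (pow_nonneg hq0 n)
      _ = ∫⁻ a in A, ENNReal.ofReal (q ^ n * Real.cos (c * (x + a))) ∂γ :=
          ofReal_integral_eq_lintegral_ofReal hIntOn hae
      _ = ∫⁻ a, A.indicator (fun a => ENNReal.ofReal (q ^ n * Real.cos (c * (x + a)))) a ∂γ :=
          (lintegral_indicator hAmeas _).symm
      _ ≤ ∫⁻ a, (Measure.pi fun _ : Fin n => γ) (Prod.mk a ⁻¹' S) ∂γ := lintegral_mono hstep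

end Walk

end GRWSB

/-- Small-ball probability for a first-order Gaussian random walk.
Let `w₂, …, w_m` be i.i.d. `N(0, σ²)` (modeled as the product Gaussian measure on
`Fin (m-1) → ℝ`) and let `x_t = w₂ + ⋯ + w_t` be the random walk started at `0`.
Then `P(max_{2 ≤ t ≤ m} |x_t| ≤ δ) ≥ exp(−C m σ²/δ²)` with `C = 2(1 + 3e√(2π))²`. -/

theorem gaussian_random_walk_small_ball (m : ℕ) (hm : 2 ≤ m) (σ δ : ℝ)
    (hσ : 0 < σ) (hδ : 0 < δ) :
    ENNReal.ofReal
        (Real.exp (-(2 * (1 + 3 * Real.exp 1 * Real.sqrt (2 * Real.pi)) ^ 2)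
          * m * σ ^ 2 / δ ^ 2))
      ≤ (Measure.pi fun _ : Fin (m - 1) => gaussianReal 0 (σ ^ 2).toNNReal)
          {w | ∀ t : Fin (m - 1), |∑ s ∈ univ.filter (fun s : Fin (m - 1) => s ≤ t), w s| ≤ δ} := by
  have hv : (σ ^ 2).toNNReal ≠ 0 := by
    rw [ne_eq, Real.toNNReal_eq_zero, not_le]
    positivity
  have hσ2 : ((σ ^ 2).toNNReal : ℝ) = σ ^ 2 := Real.coe_toNNReal _ (sq_nonneg σ)
  have hb := GRWSB.walk_bound hv hδ (m - 1) 0 (by simpa using hδ.le)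
  simp only [zero_add, mul_zero, Real.cos_zero, mul_one, hσ2] at hb
  refine le_trans ?_ hb
  apply ENNReal.ofReal_le_ofReal
  rw [← Real.exp_nat_mul]
  apply Real.exp_le_exp.mpr
  set K : ℝ := (1 + 3 * Real.exp 1 * Real.sqrt (2 * Real.pi)) ^ 2 with hK_def
  have hK : 1 ≤ K := by
    rw [hK_def]
    have h1 : 0 ≤ 3 * Real.exp 1 * Real.sqrt (2 * Real.pi) := by positivity
    nlinarith
  have hπ16 : Real.pi ^ 2 ≤ 16 := by
    nlinarith [Real.pi_le_four, Real.pi_pos]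
  have hnm : ((m - 1 : ℕ) : ℝ) ≤ (m : ℝ) := by
    exact_mod_cast Nat.sub_le m 1
  have hn0 : (0:ℝ) ≤ ((m - 1 : ℕ) : ℝ) := Nat.cast_nonneg _
  have hm0 : (0:ℝ) ≤ (m : ℝ) := Nat.cast_nonneg _
  have hδ2 : (0:ℝ) < δ ^ 2 := by positivity
  have hσ2p : (0:ℝ) < σ ^ 2 := by positivity
  rw [div_le_iff₀ hδ2]
  have hπδ : (Real.pi / (2 * δ)) ^ 2 * δ ^ 2 = Real.pi ^ 2 / 4 := by
    field_simp
    ring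
  have hA : ((m - 1 : ℕ) : ℝ) * (-σ ^ 2 * (Real.pi / (2 * δ)) ^ 2 / 2) * δ ^ 2
      = -(((m - 1 : ℕ) : ℝ) * σ ^ 2 * Real.pi ^ 2) / 8 := by
    field_simp
    ring
  rw [hA]
  nlinarith [mul_le_mul_of_nonneg_left hnm (le_of_lt hσ2p),
    mul_le_mul_of_nonneg_left hπ16 (mul_nonneg hn0 hσ2p.le),
    mul_le_mul_of_nonneg_left hK (by positivity : (0:ℝ) ≤ 2 * (m:ℝ) * σ^2)]
end

section
/- Procrustes alignment controlled by the Gram-matrix difference (Lemma S.3). For any X, X₀ ∈ ℝ^{n×d} with X₀ of full column rank (equivalently, smallest singular value σ_d(X₀) > 0), min_{W ∈ 𝒪_d} ‖X − X₀W‖_F² ≤ ‖XXᵀ − X₀X₀ᵀ‖_F² / ( 2(√2 − 1) σ_d(X₀)² ), where σ_d(X₀) denotes the smallest singular value of X₀. -/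
open Finset

/-- Frobenius squared norm of a rectangular array. -/
def frobSq {α β : Type*} [Fintype α] [Fintype β] (A : α → β → ℝ) : ℝ :=
  ∑ i, ∑ j, (A i j) ^ 2

/-- Gram matrix `X Xᵀ` of an `n × d` array. -/
def gram {n d : ℕ} (X : Fin n → Fin d → ℝ) : Fin n → Fin n → ℝ :=
  fun i j => ∑ h, X i h * X j h

/-- The square `σ_d(X₀)²` of the smallest singular value of an `n × d` matrix `X₀`,
characterized variationally as `inf {‖X₀ v‖₂² : ‖v‖₂ = 1}`. -/
noncomputable def minSingValSq {n d : ℕ} (X₀ : Fin n → Fin d → ℝ) : ℝ :=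
  sInf {r : ℝ | ∃ v : Fin d → ℝ, (∑ h, (v h) ^ 2) = 1 ∧
    r = ∑ i, (∑ h, X₀ i h * v h) ^ 2}

/-- A square matrix `W` is orthogonal: `Wᵀ W = I`. -/
def IsOrthogonal {d : ℕ} (W : Fin d → Fin d → ℝ) : Prop :=
  ∀ a b, (∑ c, W c a * W c b) = if a = b then (1 : ℝ) else 0

namespace ProcrustesAux

open Matrix

variable {n d : ℕ}

/-- quadratic form of a square matrix -/
def qf {d : ℕ} (S : Matrix (Fin d) (Fin d) ℝ) (v : Fin d → ℝ) : ℝ :=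
  ∑ i, ∑ j, v i * S i j * v j

lemma isOrth_iff (W : Matrix (Fin d) (Fin d) ℝ) : IsOrthogonal W ↔ Wᵀ * W = 1 := by
  constructor
  · intro h
    ext a b
    simpa [Matrix.mul_apply, Matrix.one_apply] using h a b
  · intro h a b
    have := congrFun (congrFun h a) b
    simpa [Matrix.mul_apply, Matrix.one_apply] using this

lemma isOrth_one : IsOrthogonal (1 : Matrix (Fin d) (Fin d) ℝ) := by
  rw [isOrth_iff]; simp

lemma isOrth_mul {W O : Matrix (Fin d) (Fin d) ℝ}
    (hW : IsOrthogonal W) (hO : IsOrthogonal O) : IsOrthogonal (W * O) := by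
  rw [isOrth_iff] at *
  rw [Matrix.transpose_mul, Matrix.mul_assoc, ← Matrix.mul_assoc Wᵀ, hW, Matrix.one_mul, hO]

/-- maximizer of `W ↦ tr(Wᵀ M)` over the orthogonal group -/
lemma exists_max_orth (M : Matrix (Fin d) (Fin d) ℝ) :
    ∃ W : Matrix (Fin d) (Fin d) ℝ, IsOrthogonal W ∧
      ∀ O : Matrix (Fin d) (Fin d) ℝ, IsOrthogonal O →
        Matrix.trace (Oᵀ * M) ≤ Matrix.trace (Wᵀ * M) := by
  have hcont : Continuous fun W : Matrix (Fin d) (Fin d) ℝ => Matrix.trace (Wᵀ * M) :=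
    ((continuous_id.matrix_transpose).matrix_mul continuous_const).matrix_trace
  have hclosed : IsClosed {W : Matrix (Fin d) (Fin d) ℝ | IsOrthogonal W} := by
    have : {W : Matrix (Fin d) (Fin d) ℝ | IsOrthogonal W}
        = ⋂ a, ⋂ b, {W : Matrix (Fin d) (Fin d) ℝ |
            (∑ c, W c a * W c b) = if a = b then (1:ℝ) else 0} := by
      ext W; simp [IsOrthogonal, Set.mem_iInter]
    rw [this]
    refine isClosed_iInter fun a => isClosed_iInter fun b => isClosed_eq ?_ continuous_const
    exact continuous_finset_sum _ fun c _ =>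
      ((continuous_id.matrix_elem c a).mul (continuous_id.matrix_elem c b))
  have hsub : {W : Matrix (Fin d) (Fin d) ℝ | IsOrthogonal W} ⊆
      Set.pi Set.univ (fun _ : Fin d => Set.pi Set.univ
        (fun _ : Fin d => Set.Icc (-1 : ℝ) 1)) := by
    intro W hW c
    intro _ a _
    have h1 : (∑ c', W c' a * W c' a) = 1 := by simpa using hW a a
    have h2 : W c a * W c a ≤ 1 := by
      rw [← h1]
      exact Finset.single_le_sum (fun i _ => mul_self_nonneg (W i a)) (Finset.mem_univ c)
    constructor <;> nlinarith
  have hboxcomp : IsCompact (Set.pi Set.univ (fun _ : Fin d => Set.pi Set.univ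
      (fun _ : Fin d => Set.Icc (-1 : ℝ) 1)) : Set (Matrix (Fin d) (Fin d) ℝ)) :=
    isCompact_univ_pi fun _ => isCompact_univ_pi fun _ => isCompact_Icc
  have hK : IsCompact {W : Matrix (Fin d) (Fin d) ℝ | IsOrthogonal W} :=
    hboxcomp.of_isClosed_subset hclosed hsub
  obtain ⟨W, hWmem, hmax⟩ := hK.exists_isMaxOn ⟨1, isOrth_one⟩ hcont.continuousOn
  exact ⟨W, hWmem, fun O hO => hmax hO⟩

/-- reflection matrix -/
noncomputable def refl (v : Fin d → ℝ) : Matrix (Fin d) (Fin d) ℝ :=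
  1 - (2 : ℝ) • Matrix.vecMulVec v v

lemma refl_transpose (v : Fin d → ℝ) : (refl v)ᵀ = refl v := by
  ext a b
  simp [refl, Matrix.vecMulVec, Matrix.one_apply, Matrix.transpose_apply, eq_comm, mul_comm]

lemma refl_orth {v : Fin d → ℝ} (hv : ∑ i, v i ^ 2 = 1) : IsOrthogonal (refl v) := by
  rw [isOrth_iff, refl_transpose]
  have hP : Matrix.vecMulVec v v * Matrix.vecMulVec v v = Matrix.vecMulVec v v := by
    ext a b
    simp only [Matrix.mul_apply, Matrix.vecMulVec_apply]
    calc ∑ k, v a * v k * (v k * v b) = (v a * v b) * ∑ k, v k ^ 2 := by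
          rw [Finset.mul_sum]; congr 1; funext k; ring
      _ = v a * v b := by rw [hv, mul_one]
  simp only [refl, Matrix.sub_mul, Matrix.mul_sub, Matrix.smul_mul, Matrix.mul_smul,
    Matrix.one_mul, Matrix.mul_one, hP, smul_smul]
  module

lemma trace_vecMulVec_mul (x y : Fin d → ℝ) (S : Matrix (Fin d) (Fin d) ℝ) :
    Matrix.trace (Matrix.vecMulVec x y * S) = ∑ i, ∑ j, y i * S i j * x j := by
  simp only [Matrix.trace, Matrix.diag, Matrix.mul_apply, Matrix.vecMulVec_apply]
  rw [Finset.sum_comm]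
  exact Finset.sum_congr rfl fun i _ => Finset.sum_congr rfl fun j _ => by ring

lemma sum_one' {f : Fin d → ℝ} (i : Fin d) (h : ∀ k, k ≠ i → f k = 0) :
    ∑ k, f k = f i :=
  Finset.sum_eq_single i (fun k _ hk => h k hk) (fun hi => absurd (Finset.mem_univ i) hi)

lemma sum_two' {f : Fin d → ℝ} (i j : Fin d) (hij : i ≠ j)
    (h : ∀ k, k ≠ i → k ≠ j → f k = 0) : ∑ k, f k = f i + f j := by
  rw [← Finset.sum_pair hij]
  exact (Finset.sum_subset (Finset.subset_univ _)
    (fun x _ hx => h x (fun h1 => hx (by simp [h1])) (fun h2 => hx (by simp [h2])))).symm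

lemma nonpos_of_master {a b : ℝ} (ha : 0 ≤ a)
    (master : ∀ α β : ℝ, α ^ 2 + β ^ 2 = 1 → α * β * b ≤ β ^ 2 * a) : b ≤ 0 := by
  by_contra hb
  push_neg at hb
  set ε : ℝ := min (1/2) (b / (4 * a + 4)) with hε
  have hε0 : 0 < ε := lt_min (by norm_num) (div_pos hb (by linarith))
  have hε12 : ε ≤ 1/2 := min_le_left _ _
  have hεb : ε ≤ b / (4 * a + 4) := min_le_right _ _
  have hεb' : ε * (4 * a + 4) ≤ b := by
    rw [← div_mul_cancel₀ b (show (4:ℝ) * a + 4 ≠ 0 by positivity)]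
    exact mul_le_mul_of_nonneg_right hεb (by positivity)
  have h1 : (0:ℝ) ≤ 1 - ε ^ 2 := by nlinarith
  set α : ℝ := Real.sqrt (1 - ε ^ 2) with hαdef
  have hα2 : α ^ 2 = 1 - ε ^ 2 := Real.sq_sqrt h1
  have hα0 : 0 ≤ α := Real.sqrt_nonneg _
  have hα : 1/2 ≤ α := by nlinarith
  have hm := master α ε (by rw [hα2]; ring)
  nlinarith [mul_pos hε0 hb, mul_nonneg ha hb.le, mul_nonneg hε0.le (mul_nonneg ha hb.le),
    mul_le_mul_of_nonneg_left hεb' hε0.le]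

/-- polar decomposition: exists orthogonal W with Wᵀ M symmetric psd -/
lemma exists_polar (M : Matrix (Fin d) (Fin d) ℝ) :
    ∃ W : Matrix (Fin d) (Fin d) ℝ, IsOrthogonal W ∧ (Wᵀ * M)ᵀ = Wᵀ * M ∧
      ∀ v : Fin d → ℝ, 0 ≤ qf (Wᵀ * M) v := by
  obtain ⟨W, hW, hmax⟩ := exists_max_orth M
  set S := Wᵀ * M with hSdef
  have key : ∀ O : Matrix (Fin d) (Fin d) ℝ, IsOrthogonal O →
      Matrix.trace (Oᵀ * S) ≤ Matrix.trace S := by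
    intro O hO
    have h1 := hmax (W * O) (isOrth_mul hW hO)
    have h2 : (W * O)ᵀ * M = Oᵀ * S := by
      rw [Matrix.transpose_mul, Matrix.mul_assoc, hSdef]
    rw [h2] at h1
    exact h1
  have hPP : ∀ x y : Fin d → ℝ, Matrix.vecMulVec x x * Matrix.vecMulVec y y
      = (∑ k, x k * y k) • Matrix.vecMulVec x y := by
    intro x y; ext a b
    simp only [Matrix.mul_apply, Matrix.vecMulVec_apply, Matrix.smul_apply, smul_eq_mul]
    calc ∑ k, x a * x k * (y k * y b) = (∑ k, x k * y k) * (x a * y b) := by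
          rw [Finset.sum_mul]; exact Finset.sum_congr rfl fun k _ => by ring
      _ = _ := rfl
  have htrace_refl : ∀ x : Fin d → ℝ, Matrix.trace (refl x * S)
      = Matrix.trace S - 2 * qf S x := by
    intro x
    simp only [refl, Matrix.sub_mul, Matrix.one_mul, Matrix.smul_mul, Matrix.trace_sub,
      Matrix.trace_smul, trace_vecMulVec_mul, smul_eq_mul, qf]
  have hqf_unit : ∀ v : Fin d → ℝ, (∑ i, v i ^ 2) = 1 → 0 ≤ qf S v := by
    intro v hv
    have h := key (refl v) (refl_orth hv)
    rw [refl_transpose, htrace_refl] at h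
    linarith
  have hqf : ∀ v : Fin d → ℝ, 0 ≤ qf S v := by
    intro v
    rcases eq_or_lt_of_le (Finset.sum_nonneg fun i _ => sq_nonneg (v i)) with h0 | h0
    · have hz : ∀ i, v i = 0 := by
        intro i
        have := (Finset.sum_eq_zero_iff_of_nonneg fun i _ => sq_nonneg (v i)).1 h0.symm i
          (Finset.mem_univ i)
        exact pow_eq_zero_iff two_ne_zero |>.1 this
      simp [qf, hz]
    · set c : ℝ := Real.sqrt (∑ i, v i ^ 2) with hcdef
      have hc : 0 < c := Real.sqrt_pos.2 h0
      have hc2 : c ^ 2 = ∑ i, v i ^ 2 := Real.sq_sqrt h0.le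
      have hunit : (∑ i, (c⁻¹ * v i) ^ 2) = 1 := by
        simp only [mul_pow, ← Finset.mul_sum]
        rw [← hc2]
        field_simp
      have h := hqf_unit (fun i => c⁻¹ * v i) hunit
      have hqs : qf S (fun i => c⁻¹ * v i) = (c⁻¹) ^ 2 * qf S v := by
        simp only [qf, Finset.mul_sum]
        exact Finset.sum_congr rfl fun i _ => Finset.sum_congr rfl fun j _ => by ring
      rw [hqs] at h
      have hcinv : 0 < (c⁻¹) ^ 2 := by positivity
      nlinarith
  have hdiag : ∀ i : Fin d, 0 ≤ S i i := by
    intro i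
    have h := hqf (fun k => if k = i then 1 else 0)
    have heq : qf S (fun k => if k = i then (1:ℝ) else 0) = S i i := by
      rw [qf]
      rw [sum_one' i (fun a ha => Finset.sum_eq_zero fun b _ => by simp [ha])]
      rw [sum_one' i (fun b hb => by simp [hb])]
      simp
    rwa [heq] at h
  have hsym' : ∀ i j : Fin d, i ≠ j → S i j - S j i ≤ 0 := by
    intro i j hij
    refine nonpos_of_master (add_nonneg (hdiag i) (hdiag j)) ?_
    intro α β hαβ
    set u : Fin d → ℝ := fun k => if k = i then 1 else 0 with hu
    set w : Fin d → ℝ := fun k => if k = i then α else if k = j then β else 0 with hw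
    have hu1 : ∑ k, u k ^ 2 = 1 := by
      rw [sum_one' i (fun k hk => by simp [hu, hk])]
      simp [hu]
    have hw1 : ∑ k, w k ^ 2 = 1 := by
      rw [sum_two' i j hij (fun k hk1 hk2 => by simp [hw, hk1, hk2])]
      simp only [hw, if_pos rfl, if_neg hij.symm, if_pos rfl]
      exact hαβ
    have h := key (refl u * refl w) (isOrth_mul (refl_orth hu1) (refl_orth hw1))
    have hOT : (refl u * refl w)ᵀ = refl w * refl u := by
      rw [Matrix.transpose_mul, refl_transpose, refl_transpose]
    rw [hOT] at h
    have hprod : refl w * refl u = 1 - (2:ℝ) • Matrix.vecMulVec u u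
        - (2:ℝ) • Matrix.vecMulVec w w
        + (4 * ∑ k, w k * u k) • Matrix.vecMulVec w u := by
      simp only [refl, Matrix.sub_mul, Matrix.mul_sub, Matrix.one_mul, Matrix.mul_one,
        Matrix.smul_mul, Matrix.mul_smul, hPP, smul_smul]
      module
    have htr : Matrix.trace (refl w * refl u * S) = Matrix.trace S
        - 2 * qf S u - 2 * qf S w
        + (4 * ∑ k, w k * u k) * (∑ a, ∑ b, u a * S a b * w b) := by
      rw [hprod]
      simp only [Matrix.sub_mul, Matrix.add_mul, Matrix.one_mul, Matrix.smul_mul,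
        Matrix.trace_sub, Matrix.trace_add, Matrix.trace_smul, trace_vecMulVec_mul,
        smul_eq_mul, qf]
    rw [htr] at h
    -- compute the indicator sums
    have hs : (∑ k, w k * u k) = α := by
      rw [sum_one' i (fun k hk => by simp [hu, hk])]
      simp [hu, hw]
    have hqu : qf S u = S i i := by
      rw [qf]
      rw [sum_one' i (fun a ha => Finset.sum_eq_zero fun b _ => by simp [hu, ha])]
      rw [sum_one' i (fun b hb => by simp [hu, hb])]
      simp [hu]
    have hB : (∑ a, ∑ b, u a * S a b * w b) = α * S i i + β * S i j := by
      rw [sum_one' i (fun a ha => Finset.sum_eq_zero fun b _ => by simp [hu, ha])]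
      rw [sum_two' i j hij (fun b hb1 hb2 => by simp [hw, hb1, hb2])]
      simp only [hu, hw, if_pos rfl, if_neg hij.symm, if_true]
      ring
    have hqw : qf S w = α * S i i * α + α * S i j * β + β * S j i * α + β * S j j * β := by
      rw [qf]
      rw [sum_two' i j hij (fun a ha1 ha2 => Finset.sum_eq_zero fun b _ => by
        simp [hw, ha1, ha2])]
      rw [sum_two' i j hij (fun b hb1 hb2 => by simp [hw, hb1, hb2])]
      rw [sum_two' i j hij (fun b hb1 hb2 => by simp [hw, hb1, hb2])]
      simp only [hw, if_pos rfl, if_neg hij.symm, if_true]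
      ring
    rw [hs, hqu, hB, hqw] at h
    have hii : (α ^ 2 + β ^ 2 - 1) * S i i = 0 := by
      rw [show α ^ 2 + β ^ 2 - 1 = 0 by linarith]; ring
    nlinarith [h, hii]
  have hsymm : Sᵀ = S := by
    ext a b
    rw [Matrix.transpose_apply]
    rcases eq_or_ne a b with rfl | hab
    · rfl
    · have h1 := hsym' a b hab
      have h2 := hsym' b a hab.symm
      linarith
  exact ⟨W, hW, hsymm, hqf⟩

lemma qf_gram (Y : Matrix (Fin n) (Fin d) ℝ) (v : Fin d → ℝ) :
    qf (Yᵀ * Y) v = ∑ i, (∑ a, Y i a * v a) ^ 2 := by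
  simp only [qf, Matrix.mul_apply, Matrix.transpose_apply, pow_two, Finset.sum_mul_sum]
  simp only [Finset.sum_mul, Finset.mul_sum]
  have h1 : ∀ a : Fin d, (∑ b : Fin d, ∑ i : Fin n, v a * (Y i a * Y i b) * v b)
      = ∑ i : Fin n, ∑ b : Fin d, v a * (Y i a * Y i b) * v b := fun a => Finset.sum_comm
  simp_rw [h1]
  rw [Finset.sum_comm]
  exact Finset.sum_congr rfl fun i _ =>
    Finset.sum_congr rfl fun a _ => Finset.sum_congr rfl fun b _ => by ring

lemma trace_mul_sym {D Q : Matrix (Fin d) (Fin d) ℝ} (hQ : Qᵀ = Q) :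
    Matrix.trace (D * Q) = ∑ a, ∑ b, D a b * Q a b := by
  simp only [Matrix.trace, Matrix.diag, Matrix.mul_apply]
  refine Finset.sum_congr rfl fun a _ => Finset.sum_congr rfl fun b _ => ?_
  have h := congrFun (congrFun hQ a) b
  rw [Matrix.transpose_apply] at h
  rw [h]

lemma trace_EtE (E : Matrix (Fin n) (Fin d) ℝ) :
    Matrix.trace (Eᵀ * E) = ∑ i, ∑ j, (E i j) ^ 2 := by
  simp only [Matrix.trace, Matrix.diag, Matrix.mul_apply, Matrix.transpose_apply]
  rw [Finset.sum_comm]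
  exact Finset.sum_congr rfl fun i _ => Finset.sum_congr rfl fun j _ => (pow_two _).symm

lemma minSing_bound (X₀ : Fin n → Fin d → ℝ) (v : Fin d → ℝ) :
    minSingValSq X₀ * (∑ h, v h ^ 2) ≤ ∑ i, (∑ h, X₀ i h * v h) ^ 2 := by
  have hbdd : BddBelow {r : ℝ | ∃ v : Fin d → ℝ, (∑ h, (v h) ^ 2) = 1 ∧
      r = ∑ i, (∑ h, X₀ i h * v h) ^ 2} := by
    refine ⟨0, fun r hr => ?_⟩
    obtain ⟨u, -, rfl⟩ := hr
    exact Finset.sum_nonneg fun i _ => sq_nonneg _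
  rcases eq_or_lt_of_le (Finset.sum_nonneg fun h _ => sq_nonneg (v h)) with h0 | h0
  · rw [← h0, mul_zero]
    exact Finset.sum_nonneg fun i _ => sq_nonneg _
  · set c : ℝ := Real.sqrt (∑ h, v h ^ 2) with hc
    have hcpos : 0 < c := Real.sqrt_pos.2 h0
    have hc2 : c ^ 2 = ∑ h, v h ^ 2 := Real.sq_sqrt h0.le
    have hmem : (∑ i, (∑ h, X₀ i h * (c⁻¹ * v h)) ^ 2) ∈ {r : ℝ | ∃ v : Fin d → ℝ,
        (∑ h, (v h) ^ 2) = 1 ∧ r = ∑ i, (∑ h, X₀ i h * v h) ^ 2} := by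
      refine ⟨fun h => c⁻¹ * v h, ?_, rfl⟩
      simp only [mul_pow, ← Finset.mul_sum]
      rw [← hc2]
      field_simp
    have hle : minSingValSq X₀ ≤ ∑ i, (∑ h, X₀ i h * (c⁻¹ * v h)) ^ 2 := csInf_le hbdd hmem
    have hscale : (∑ i, (∑ h, X₀ i h * (c⁻¹ * v h)) ^ 2)
        = (c⁻¹) ^ 2 * ∑ i, (∑ h, X₀ i h * v h) ^ 2 := by
      rw [Finset.mul_sum]
      refine Finset.sum_congr rfl fun i _ => ?_
      rw [show (∑ h, X₀ i h * (c⁻¹ * v h)) = c⁻¹ * ∑ h, X₀ i h * v h from by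
        rw [Finset.mul_sum]; exact Finset.sum_congr rfl fun h _ => by ring]
      ring
    rw [hscale] at hle
    have h2 := mul_le_mul_of_nonneg_right hle (sq_nonneg c)
    calc minSingValSq X₀ * ∑ h, v h ^ 2 = minSingValSq X₀ * c ^ 2 := by rw [hc2]
      _ ≤ ((c⁻¹) ^ 2 * ∑ i, (∑ h, X₀ i h * v h) ^ 2) * c ^ 2 := h2
      _ = ∑ i, (∑ h, X₀ i h * v h) ^ 2 := by
          field_simp

lemma trace_four (U V P R : Matrix (Fin n) (Fin d) ℝ) :
    Matrix.trace ((U * Vᵀ) * (P * Rᵀ)) = Matrix.trace ((Vᵀ * P) * (Rᵀ * U)) := by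
  rw [Matrix.mul_assoc, Matrix.trace_mul_comm]
  congr 1
  simp [Matrix.mul_assoc]

lemma trace_EtEP (E : Matrix (Fin n) (Fin d) ℝ) (P : Matrix (Fin d) (Fin d) ℝ) :
    Matrix.trace (Eᵀ * E * P) = ∑ i, qf P (fun j => E i j) := by
  simp only [Matrix.trace, Matrix.diag, Matrix.mul_apply, Matrix.transpose_apply, qf,
    Finset.sum_mul]
  have h1 : ∀ a : Fin d, (∑ b : Fin d, ∑ i : Fin n, E i a * E i b * P b a)
      = ∑ i : Fin n, ∑ b : Fin d, E i a * E i b * P b a := fun a => Finset.sum_comm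
  simp_rw [h1]
  rw [Finset.sum_comm]
  refine Finset.sum_congr rfl fun i _ => ?_
  rw [Finset.sum_comm]
  exact Finset.sum_congr rfl fun a _ => Finset.sum_congr rfl fun b _ => by ring

lemma frobSq_eq_trace (A : Matrix (Fin n) (Fin d) ℝ) :
    frobSq (fun i j => A i j) = Matrix.trace (Aᵀ * A) := by
  simp only [frobSq, Matrix.trace, Matrix.diag, Matrix.mul_apply, Matrix.transpose_apply]
  rw [Finset.sum_comm]
  exact Finset.sum_congr rfl fun i _ => Finset.sum_congr rfl fun j _ => (pow_two _)

lemma gram_identity (Xm Y E : Matrix (Fin n) (Fin d) ℝ) (hX : Xm = Y + E)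
    (hQ : (Yᵀ * E)ᵀ = Yᵀ * E) :
    Matrix.trace ((Xm * Xmᵀ - Y * Yᵀ)ᵀ * (Xm * Xmᵀ - Y * Yᵀ))
      = 2 * Matrix.trace (Eᵀ * E * (Yᵀ * Y)) + 4 * Matrix.trace (Eᵀ * E * (Yᵀ * E))
        + Matrix.trace (Eᵀ * E * (Eᵀ * E)) + 2 * Matrix.trace ((Yᵀ * E) * (Yᵀ * E)) := by
  have hΔ : Xm * Xmᵀ - Y * Yᵀ = Y * Eᵀ + E * Yᵀ + E * Eᵀ := by
    rw [hX]
    simp only [Matrix.transpose_add, Matrix.add_mul, Matrix.mul_add]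
    abel
  have hΔT : (Xm * Xmᵀ - Y * Yᵀ)ᵀ = Xm * Xmᵀ - Y * Yᵀ := by
    rw [hΔ]
    simp only [Matrix.transpose_add, Matrix.transpose_mul, Matrix.transpose_transpose]
    abel
  rw [hΔT, hΔ]
  simp only [Matrix.add_mul, Matrix.mul_add, Matrix.trace_add]
  rw [trace_four Y E Y E, trace_four Y E E Y, trace_four Y E E E, trace_four E Y Y E,
    trace_four E Y E Y, trace_four E Y E E, trace_four E E Y E, trace_four E E E Y,
    trace_four E E E E]
  have hQT : Eᵀ * Y = Yᵀ * E := by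
    have h := hQ
    rwa [Matrix.transpose_mul, Matrix.transpose_transpose] at h
  rw [hQT]
  rw [Matrix.trace_mul_comm (Yᵀ * Y) (Eᵀ * E), Matrix.trace_mul_comm (Yᵀ * E) (Eᵀ * E)]
  ring


set_option maxHeartbeats 1600000 in
theorem main {n d : ℕ}
    (X X₀ : Fin n → Fin d → ℝ) (hrank : 0 < minSingValSq X₀) :
    ∃ W : Fin d → Fin d → ℝ, IsOrthogonal W ∧
      frobSq (fun i h => X i h - ∑ h', X₀ i h' * W h' h)
        ≤ frobSq (fun i j => gram X i j - gram X₀ i j)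
            / (2 * (Real.sqrt 2 - 1) * minSingValSq X₀) := by
  classical
  obtain ⟨W, hW, hsymS, hpsdS⟩ :=
    ProcrustesAux.exists_polar ((Matrix.of X₀)ᵀ * (Matrix.of X))
  refine ⟨W, hW, ?_⟩
  set Xm : Matrix (Fin n) (Fin d) ℝ := Matrix.of X with hXm
  set X0 : Matrix (Fin n) (Fin d) ℝ := Matrix.of X₀ with hX0
  set Y : Matrix (Fin n) (Fin d) ℝ := X0 * W with hYdef
  set E : Matrix (Fin n) (Fin d) ℝ := Xm - Y with hEdef
  have hXYE : Xm = Y + E := by rw [hEdef]; abel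
  have hWOrth : Wᵀ * W = 1 := (ProcrustesAux.isOrth_iff W).1 hW
  have hWWT : W * Wᵀ = 1 := mul_eq_one_comm.mp hWOrth
  have hYYT : Y * Yᵀ = X0 * X0ᵀ := by
    rw [hYdef, Matrix.transpose_mul, Matrix.mul_assoc, ← Matrix.mul_assoc W, hWWT,
      Matrix.one_mul]
  have hLHS : (fun i h => X i h - ∑ h', X₀ i h' * W h' h) = (fun i h => E i h) := by
    funext i h
    simp [hEdef, hYdef, Matrix.sub_apply, Matrix.mul_apply, hXm, hX0]
  have hRHS : (fun i j => gram X i j - gram X₀ i j)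
      = (fun i j => (Xm * Xmᵀ - Y * Yᵀ) i j) := by
    funext i j
    rw [hYYT]
    simp [_root_.gram, Matrix.sub_apply, Matrix.mul_apply, Matrix.transpose_apply, hXm, hX0]
  rw [hLHS, hRHS, ProcrustesAux.frobSq_eq_trace, ProcrustesAux.frobSq_eq_trace]
  -- basic symmetric facts
  have hYX : Yᵀ * Xm = Wᵀ * (X0ᵀ * Xm) := by
    rw [hYdef, Matrix.transpose_mul, Matrix.mul_assoc]
  have hNsym : (Yᵀ * Y)ᵀ = Yᵀ * Y := by
    rw [Matrix.transpose_mul, Matrix.transpose_transpose]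
  have hQsym : (Yᵀ * E)ᵀ = Yᵀ * E := by
    rw [hEdef, Matrix.mul_sub, Matrix.transpose_sub, hNsym, hYX, hsymS]
  have hDsym : (Eᵀ * E)ᵀ = Eᵀ * E := by
    rw [Matrix.transpose_mul, Matrix.transpose_transpose]
  have identity := ProcrustesAux.gram_identity Xm Y E hXYE hQsym
  -- positivity of tr(D * YᵀXm)
  have hpsd' : ∀ v : Fin d → ℝ, 0 ≤ ProcrustesAux.qf (Yᵀ * Xm) v := by
    intro v; rw [hYX]; exact hpsdS v
  have htrDP : 0 ≤ Matrix.trace (Eᵀ * E * (Yᵀ * Xm)) := by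
    rw [ProcrustesAux.trace_EtEP]
    exact Finset.sum_nonneg fun i _ => hpsd' _
  have hsplit : Matrix.trace (Eᵀ * E * (Yᵀ * Xm))
      = Matrix.trace (Eᵀ * E * (Yᵀ * E)) + Matrix.trace (Eᵀ * E * (Yᵀ * Y)) := by
    have h : Yᵀ * Xm = Yᵀ * E + Yᵀ * Y := by
      rw [hXYE, Matrix.mul_add]; abel
    rw [h, Matrix.mul_add, Matrix.trace_add]
  -- sigma lower bound
  set σ2 : ℝ := minSingValSq X₀ with hσ2
  have hσ : ∀ v : Fin d → ℝ, σ2 * (∑ h, v h ^ 2) ≤ ProcrustesAux.qf (Yᵀ * Y) v := by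
    intro v
    rw [ProcrustesAux.qf_gram]
    have hrow : ∀ i, (∑ a, Y i a * v a) = ∑ h, X₀ i h * (∑ a, W h a * v a) := by
      intro i
      simp only [hYdef, Matrix.mul_apply, hX0, Matrix.of_apply, Finset.sum_mul,
        Finset.mul_sum]
      rw [Finset.sum_comm]
      exact Finset.sum_congr rfl fun h _ => Finset.sum_congr rfl fun a _ => by ring
    have hu : (∑ h, (∑ a, W h a * v a) ^ 2) = ∑ a, v a ^ 2 := by
      have h1 : (∑ h, (∑ a, W h a * v a) ^ 2) = ∑ i, (∑ a, W i a * v a) ^ 2 := rfl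
      have h2 := ProcrustesAux.qf_gram W v
      rw [hWOrth] at h2
      rw [h1, ← h2]
      simp only [ProcrustesAux.qf, Matrix.one_apply, mul_ite, ite_mul, mul_one, mul_zero,
        zero_mul]
      refine Finset.sum_congr rfl fun a _ => ?_
      rw [Finset.sum_ite_eq Finset.univ a (fun b => v a * v b)]
      simp [pow_two]
    calc σ2 * ∑ h, v h ^ 2 = σ2 * ∑ h, (∑ a, W h a * v a) ^ 2 := by rw [hu]
      _ ≤ ∑ i, (∑ h, X₀ i h * (∑ a, W h a * v a)) ^ 2 := minSing_bound X₀ _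
      _ = ∑ i, (∑ a, Y i a * v a) ^ 2 :=
          Finset.sum_congr rfl fun i _ => by rw [hrow i]
  have htrD : Matrix.trace (Eᵀ * E) = ∑ i, ∑ j, (E i j) ^ 2 := ProcrustesAux.trace_EtE E
  have htrD0 : 0 ≤ Matrix.trace (Eᵀ * E) := by
    rw [htrD]
    exact Finset.sum_nonneg fun i _ => Finset.sum_nonneg fun j _ => sq_nonneg _
  have hT : σ2 * Matrix.trace (Eᵀ * E) ≤ Matrix.trace (Eᵀ * E * (Yᵀ * Y)) := by
    rw [ProcrustesAux.trace_EtEP, htrD, Finset.mul_sum]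
    exact Finset.sum_le_sum fun i _ => hσ (fun j => E i j)
  -- Cauchy-Schwarz
  have hRr : Matrix.trace (Eᵀ * E * (Yᵀ * E))
      = ∑ a, ∑ b, (Eᵀ * E) a b * (Yᵀ * E) a b := ProcrustesAux.trace_mul_sym hQsym
  have haD : Matrix.trace (Eᵀ * E * (Eᵀ * E)) = ∑ a, ∑ b, ((Eᵀ * E) a b) ^ 2 := by
    rw [ProcrustesAux.trace_mul_sym hDsym]
    exact Finset.sum_congr rfl fun a _ => Finset.sum_congr rfl fun b _ => (pow_two _).symm
  have hbQ : Matrix.trace ((Yᵀ * E) * (Yᵀ * E)) = ∑ a, ∑ b, ((Yᵀ * E) a b) ^ 2 := by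
    rw [ProcrustesAux.trace_mul_sym hQsym]
    exact Finset.sum_congr rfl fun a _ => Finset.sum_congr rfl fun b _ => (pow_two _).symm
  have hCS : (Matrix.trace (Eᵀ * E * (Yᵀ * E))) ^ 2
      ≤ Matrix.trace (Eᵀ * E * (Eᵀ * E)) * Matrix.trace ((Yᵀ * E) * (Yᵀ * E)) := by
    rw [hRr, haD, hbQ]
    have h := Finset.sum_mul_sq_le_sq_mul_sq Finset.univ
      (fun p : Fin d × Fin d => (Eᵀ * E) p.1 p.2) (fun p : Fin d × Fin d => (Yᵀ * E) p.1 p.2)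
    simpa only [Fintype.sum_prod_type] using h
  have haD0 : 0 ≤ Matrix.trace (Eᵀ * E * (Eᵀ * E)) := by
    rw [haD]
    exact Finset.sum_nonneg fun a _ => Finset.sum_nonneg fun b _ => sq_nonneg _
  have hbQ0 : 0 ≤ Matrix.trace ((Yᵀ * E) * (Yᵀ * E)) := by
    rw [hbQ]
    exact Finset.sum_nonneg fun a _ => Finset.sum_nonneg fun b _ => sq_nonneg _
  -- final arithmetic
  set s : ℝ := Real.sqrt 2 with hsdef
  have hs2 : s ^ 2 = 2 := Real.sq_sqrt (by norm_num)
  have hs0 : 0 ≤ s := Real.sqrt_nonneg 2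
  have hs1 : 1 < s := by
    rw [hsdef, show (1:ℝ) = Real.sqrt 1 by simp]
    exact Real.sqrt_lt_sqrt (by norm_num) (by norm_num)
  have hsle2 : s ≤ 2 := by nlinarith [hs2, hs0]
  have hden : 0 < 2 * (s - 1) * σ2 := by
    have : (0:ℝ) < 2 * (s - 1) := by linarith
    exact mul_pos this hrank
  rw [le_div_iff₀ hden, identity]
  set T : ℝ := Matrix.trace (Eᵀ * E * (Yᵀ * Y)) with hTdef
  set Rr : ℝ := Matrix.trace (Eᵀ * E * (Yᵀ * E)) with hRdef
  set aD : ℝ := Matrix.trace (Eᵀ * E * (Eᵀ * E)) with haDdef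
  set bQ : ℝ := Matrix.trace ((Yᵀ * E) * (Yᵀ * E)) with hbQdef
  set trD : ℝ := Matrix.trace (Eᵀ * E) with htrDdef
  set p : ℝ := Real.sqrt aD with hpdef
  set q : ℝ := Real.sqrt bQ with hqdef
  have hp2 : p ^ 2 = aD := Real.sq_sqrt haD0
  have hq2 : q ^ 2 = bQ := Real.sq_sqrt hbQ0
  have hp0 : 0 ≤ p := Real.sqrt_nonneg _
  have hq0 : 0 ≤ q := Real.sqrt_nonneg _
  have hpq : -Rr ≤ p * q := by nlinarith [hCS, mul_nonneg hp0 hq0]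
  have hRT : 0 ≤ Rr + T := by
    have := htrDP
    rw [hsplit] at this
    linarith
  have prod1 : 0 ≤ (4 - 2 * s) * (Rr + T) := mul_nonneg (by linarith) hRT
  have prod2 : 0 ≤ (2 * s) * (Rr + p * q) := mul_nonneg (by linarith) (by linarith)
  have prod3 : 0 ≤ (2 * s - 2) * (T - σ2 * trD) := mul_nonneg (by linarith) (by linarith [hT])
  have prod4 : 0 ≤ p ^ 2 - 2 * s * (p * q) + 2 * q ^ 2 := by
    nlinarith [sq_nonneg (p - s * q), hs2, sq_nonneg q]
  have hfin : trD * (2 * (s - 1) * σ2) ≤ 2 * T + 4 * Rr + aD + 2 * bQ := by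
    rw [← hp2, ← hq2]
    nlinarith [prod1, prod2, prod3, prod4]
  exact hfin

end ProcrustesAux

/-- Procrustes alignment controlled by the Gram-matrix difference
(Lemma S.3). For `X, X₀ ∈ ℝ^{n×d}` with `X₀` of full column rank,
`min_{W ∈ 𝒪_d} ‖X − X₀W‖_F² ≤ ‖XXᵀ − X₀X₀ᵀ‖_F² / (2(√2 − 1) σ_d(X₀)²)`;
the minimum over the (compact) orthogonal group is expressed by exhibiting an
orthogonal `W` attaining the bound. -/
theorem procrustes_gram_bound {n d : ℕ}
    (X X₀ : Fin n → Fin d → ℝ) (hrank : 0 < minSingValSq X₀) :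
    ∃ W : Fin d → Fin d → ℝ, IsOrthogonal W ∧
      frobSq (fun i h => X i h - ∑ h', X₀ i h' * W h' h)
        ≤ frobSq (fun i j => gram X i j - gram X₀ i j)
            / (2 * (Real.sqrt 2 - 1) * minSingValSq X₀) :=
  ProcrustesAux.main X X₀ hrank
end

section
/- Gaussian shift inequality for symmetric convex sets (the Anderson-type bound used in the proof of Lemma S.4). Let k ≥ 1, σ > 0, let Z be a random vector in ℝ^k with i.i.d. N(0, σ²) coordinates, let μ ∈ ℝ^k, and let A ⊆ ℝ^k be a Borel-measurable convex set that is symmetric about the origin (A = −A). Then P(Z + μ ∈ A) ≥ exp(−‖μ‖₂²/(2σ²)) · P(Z ∈ A). In particular, for any norm ball: P(‖Z − μ‖ ≤ δ) ≥ exp(−‖μ‖₂²/(2σ²)) · P(‖Z‖ ≤ δ) for every δ > 0, where ‖·‖ is the ℓ₂ or ℓ∞ norm. -/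
open MeasureTheory ProbabilityTheory Finset

open scoped ENNReal

section Aux
open Real
lemma lintegral_pi_prod : ∀ {n : ℕ} (μ : Fin n → Measure ℝ), (∀ i, SigmaFinite (μ i)) →
    ∀ (f : Fin n → ℝ → ℝ≥0∞), (∀ i, Measurable (f i)) →
    ∫⁻ x, ∏ i, f i (x i) ∂Measure.pi μ = ∏ i, ∫⁻ x, f i x ∂μ i := by
  intro n
  induction n with
  | zero =>
      intro μ _ f _
      simp [Measure.pi_univ]
  | succ n ih =>
      intro μ hσ f hf
      haveI := hσ
      have hmp := measurePreserving_piFinSuccAbove μ 0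
      have hmeas : Measurable (fun y : ℝ × (Fin n → ℝ) => f 0 y.1 * ∏ j, f (Fin.succ j) (y.2 j)) := by
        apply Measurable.mul
        · exact (hf 0).comp measurable_fst
        · exact Finset.measurable_prod _ fun j _ =>
            (hf j.succ).comp ((measurable_pi_apply j).comp measurable_snd)
      have key := hmp.lintegral_comp hmeas
      simp only [Fin.zero_succAbove] at key
      have heq : ∀ x : Fin (n+1) → ℝ,
          (fun y : ℝ × (Fin n → ℝ) => f 0 y.1 * ∏ j, f (Fin.succ j) (y.2 j))
            (MeasurableEquiv.piFinSuccAbove (fun _ => ℝ) 0 x) = ∏ i, f i (x i) := by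
        intro x
        rw [Fin.prod_univ_succ]
        simp [MeasurableEquiv.piFinSuccAbove, Fin.zero_succAbove, Fin.tail]
      calc ∫⁻ x, ∏ i, f i (x i) ∂Measure.pi μ
          = ∫⁻ x, (fun y : ℝ × (Fin n → ℝ) => f 0 y.1 * ∏ j, f (Fin.succ j) (y.2 j))
              (MeasurableEquiv.piFinSuccAbove (fun _ => ℝ) 0 x) ∂Measure.pi μ :=
            lintegral_congr fun x => (heq x).symm
        _ = ∫⁻ b : ℝ × (Fin n → ℝ), f 0 b.1 * ∏ j, f (Fin.succ j) (b.2 j)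
              ∂(μ 0).prod (Measure.pi fun j => μ (Fin.succ j)) := key
        _ = (∫⁻ x, f 0 x ∂μ 0) * ∫⁻ b, ∏ j, f (Fin.succ j) (b j)
              ∂Measure.pi (fun j => μ (Fin.succ j)) :=
            lintegral_prod_mul (hf 0).aemeasurable
              (Finset.measurable_prod _ fun (j : Fin n) _ =>
                (hf j.succ).comp (measurable_pi_apply j)).aemeasurable
        _ = ∏ i, ∫⁻ x, f i x ∂μ i := by
            rw [ih _ (fun j => inferInstance) _ (fun j => hf j.succ), Fin.prod_univ_succ]

lemma pi_withDensity' {n : ℕ} (f : Fin n → ℝ → ℝ≥0∞) (hf : ∀ i, Measurable (f i))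
    (hft : ∀ i x, f i x ≠ ∞) :
    Measure.pi (fun i => (volume : Measure ℝ).withDensity (f i)) =
      (volume : Measure (Fin n → ℝ)).withDensity (fun x => ∏ i, f i (x i)) := by
  haveI : ∀ i, SigmaFinite ((volume : Measure ℝ).withDensity (f i)) := fun i =>
    SigmaFinite.withDensity_of_ne_top' (hft i)
  refine Measure.pi_eq fun s hs => ?_
  rw [withDensity_apply _ (MeasurableSet.univ_pi hs),
    ← lintegral_indicator (MeasurableSet.univ_pi hs)]
  have hind : ∀ x : Fin n → ℝ, (Set.univ.pi s).indicator (fun x => ∏ i, f i (x i)) x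
      = ∏ i, (s i).indicator (f i) (x i) := by
    intro x
    by_cases hx : x ∈ Set.univ.pi s
    · rw [Set.indicator_of_mem hx]
      exact Finset.prod_congr rfl fun i _ =>
        (Set.indicator_of_mem (hx i (Set.mem_univ i)) _).symm
    · rw [Set.indicator_of_notMem hx]
      rw [Set.mem_univ_pi] at hx
      push_neg at hx
      obtain ⟨i, hi⟩ := hx
      exact (Finset.prod_eq_zero (Finset.mem_univ i)
        (Set.indicator_of_notMem hi _)).symm
  rw [lintegral_congr hind, MeasureTheory.volume_pi,
    lintegral_pi_prod _ (fun _ => inferInstance) _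
      (fun i => (hf i).indicator (hs i))]
  exact Finset.prod_congr rfl fun i _ =>
    ((withDensity_apply _ (hs i)).trans (lintegral_indicator (hs i) _).symm).symm

lemma gauss_shift_main {k : ℕ} {σ : ℝ} (hσ : 0 < σ) (μ : Fin k → ℝ)
    (A : Set (Fin k → ℝ)) (hA : MeasurableSet A) (hsym : A = -A) :
    ENNReal.ofReal (Real.exp (-(∑ i, (μ i) ^ 2) / (2 * σ ^ 2)))
        * (Measure.pi fun _ : Fin k => gaussianReal 0 (σ ^ 2).toNNReal) A
      ≤ (Measure.pi fun _ : Fin k => gaussianReal 0 (σ ^ 2).toNNReal) {z | z + μ ∈ A} := by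
  set v : NNReal := (σ ^ 2).toNNReal with hv_def
  have hσ2 : (0 : ℝ) < σ ^ 2 := by positivity
  have hv : v ≠ 0 := by
    simp [hv_def, Real.toNNReal_eq_zero, not_le, hσ2, hσ.ne']
  have hvr : (v : ℝ) = σ ^ 2 := Real.coe_toNNReal _ hσ2.le
  set P : Measure (Fin k → ℝ) := Measure.pi fun _ => gaussianReal 0 v with hP
  set Q : Measure (Fin k → ℝ) := Measure.pi fun i => gaussianReal (μ i) v with hQ
  set Q' : Measure (Fin k → ℝ) := Measure.pi fun i => gaussianReal (-μ i) v with hQ'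
  -- Step 1 : P {z | z + μ ∈ A} = Q A
  have hT : MeasurePreserving (fun z : Fin k → ℝ => z + μ) P Q := by
    have := measurePreserving_pi (fun _ : Fin k => gaussianReal 0 v)
      (fun i => gaussianReal (μ i) v) (f := fun i x => x + μ i)
      (fun i => ⟨measurable_id.add_const _, by
        rw [gaussianReal_map_add_const (μ i)]; rw [zero_add]⟩)
    exact this
  have hstep1 : P {z | z + μ ∈ A} = Q A := by
    have := hT.measure_preimage hA.nullMeasurableSet
    simpa [Set.preimage] using this
  -- Step 2 : Q A = Q' A
  have hneg : ∀ m : ℝ, (gaussianReal (-m) v).map (fun x : ℝ => -x) = gaussianReal m v := by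
    intro m
    have := gaussianReal_map_const_mul (μ := -m) (v := v) (-1)
    have h1 : (⟨(-1 : ℝ)^2, sq_nonneg _⟩ : NNReal) = 1 := by
      ext; norm_num
    simp only [h1, one_mul, neg_one_mul, neg_neg] at this
    convert this using 2
    ext; simp
  have hN : MeasurePreserving (fun z : Fin k → ℝ => -z) Q' Q := by
    have := measurePreserving_pi (fun i : Fin k => gaussianReal (-μ i) v)
      (fun i => gaussianReal (μ i) v) (f := fun i x => -x)
      (fun i => ⟨measurable_neg, hneg (μ i)⟩)
    exact this
  have hstep2 : Q A = Q' A := by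
    have := hN.measure_preimage hA.nullMeasurableSet
    have hpre : (fun z : Fin k → ℝ => -z) ⁻¹' A = A := by
      ext z
      simp only [Set.mem_preimage]
      constructor
      · intro h; rw [hsym, Set.mem_neg]; exact h
      · intro h; rw [hsym] at h; exact Set.mem_neg.mp h
    rw [hpre] at this
    exact this.symm
  -- densities
  have hPd : P = volume.withDensity (fun x => ∏ i, gaussianPDF 0 v (x i)) := by
    rw [hP]
    simp_rw [gaussianReal_of_var_ne_zero _ hv]
    exact pi_withDensity' _ (fun i => measurable_gaussianPDF _ v)
      (fun i x => ENNReal.ofReal_ne_top)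
  have hQd : Q = volume.withDensity (fun x => ∏ i, gaussianPDF (μ i) v (x i)) := by
    rw [hQ]
    simp_rw [gaussianReal_of_var_ne_zero _ hv]
    exact pi_withDensity' _ (fun i => measurable_gaussianPDF _ v)
      (fun i x => ENNReal.ofReal_ne_top)
  have hQ'd : Q' = volume.withDensity (fun x => ∏ i, gaussianPDF (-μ i) v (x i)) := by
    rw [hQ']
    simp_rw [gaussianReal_of_var_ne_zero _ hv]
    exact pi_withDensity' _ (fun i => measurable_gaussianPDF _ v)
      (fun i x => ENNReal.ofReal_ne_top)
  -- pointwise real inequality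
  set c : ℝ := Real.exp (-(∑ i, (μ i) ^ 2) / (2 * σ ^ 2)) with hc_def
  have hc : 0 < c := Real.exp_pos _
  have h1 : ∀ m t : ℝ, gaussianPDFReal m v t
      = gaussianPDFReal 0 v t * Real.exp ((2 * t * m - m ^ 2) / (2 * σ ^ 2)) := by
    intro m t
    simp only [gaussianPDFReal, sub_zero]
    have hexp : Real.exp (-(t - m) ^ 2 / (2 * (v:ℝ)))
        = Real.exp (-t ^ 2 / (2 * (v:ℝ))) * Real.exp ((2 * t * m - m ^ 2) / (2 * σ ^ 2)) := by
      rw [← Real.exp_add]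
      congr 1
      rw [hvr]
      field_simp
      ring
    rw [hexp, ← mul_assoc]
  have hprod : ∀ (m : Fin k → ℝ) (x : Fin k → ℝ),
      ∏ i, gaussianPDFReal (m i) v (x i)
        = (∏ i, gaussianPDFReal 0 v (x i))
          * Real.exp ((∑ i, (2 * x i * m i - m i ^ 2)) / (2 * σ ^ 2)) := by
    intro m x
    rw [Finset.prod_congr rfl fun i _ => h1 (m i) (x i), Finset.prod_mul_distrib,
      ← Real.exp_sum, ← Finset.sum_div]
  have hpoint : ∀ x : Fin k → ℝ,
      2 * c * ∏ i, gaussianPDFReal 0 v (x i)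
        ≤ (∏ i, gaussianPDFReal (μ i) v (x i)) + ∏ i, gaussianPDFReal (-μ i) v (x i) := by
    intro x
    have hG : 0 ≤ ∏ i, gaussianPDFReal 0 v (x i) :=
      Finset.prod_nonneg fun i _ => gaussianPDFReal_nonneg 0 v (x i)
    rw [hprod μ x, hprod (fun i => -μ i) x]
    set G := ∏ i, gaussianPDFReal 0 v (x i)
    set M : ℝ := ∑ i, (μ i) ^ 2 with hM
    set S : ℝ := ∑ i, 2 * x i * μ i with hS
    have e1 : (∑ i, (2 * x i * μ i - μ i ^ 2)) = S - M := by
      rw [hS, hM, ← Finset.sum_sub_distrib]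
    have e2 : (∑ i, (2 * x i * (-μ i) - (-μ i) ^ 2)) = -S - M := by
      rw [hS, hM]
      simp only [← Finset.sum_neg_distrib, ← Finset.sum_sub_distrib]
      exact Finset.sum_congr rfl fun i _ => by ring
    rw [e1, e2]
    have e3 : (S - M) / (2 * σ ^ 2) = -M / (2 * σ ^ 2) + S / (2 * σ ^ 2) := by ring
    have e4 : (-S - M) / (2 * σ ^ 2) = -M / (2 * σ ^ 2) + -(S / (2 * σ ^ 2)) := by ring
    rw [e3, e4, Real.exp_add, Real.exp_add]
    have hcc : c = Real.exp (-M / (2 * σ ^ 2)) := by rw [hc_def, hM, neg_div]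
    have key : 2 ≤ Real.exp (S / (2 * σ ^ 2)) + Real.exp (-(S / (2 * σ ^ 2))) := by
      have a1 := Real.add_one_le_exp (S / (2 * σ ^ 2))
      have a2 := Real.add_one_le_exp (-(S / (2 * σ ^ 2)))
      linarith
    have hcpos : 0 < Real.exp (-M / (2 * σ ^ 2)) := Real.exp_pos _
    rw [hcc]
    nlinarith [mul_nonneg hG hcpos.le]
  -- lintegral inequality
  have hg0 : Measurable (fun x : Fin k → ℝ => ∏ i, gaussianPDF 0 v (x i)) :=
    Finset.measurable_prod _ fun i _ =>
      (measurable_gaussianPDF 0 v).comp (measurable_pi_apply i)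
  have hgμ : Measurable (fun x : Fin k → ℝ => ∏ i, gaussianPDF (μ i) v (x i)) :=
    Finset.measurable_prod _ fun i _ =>
      (measurable_gaussianPDF _ v).comp (measurable_pi_apply i)
  have hpointE : ∀ x : Fin k → ℝ,
      ENNReal.ofReal (2 * c) * ∏ i, gaussianPDF 0 v (x i)
        ≤ (∏ i, gaussianPDF (μ i) v (x i)) + ∏ i, gaussianPDF (-μ i) v (x i) := by
    intro x
    simp only [gaussianPDF]
    rw [← ENNReal.ofReal_prod_of_nonneg (fun i _ => gaussianPDFReal_nonneg _ v (x i)),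
      ← ENNReal.ofReal_prod_of_nonneg (fun i _ => gaussianPDFReal_nonneg _ v (x i)),
      ← ENNReal.ofReal_prod_of_nonneg (fun i _ => gaussianPDFReal_nonneg _ v (x i)),
      ← ENNReal.ofReal_mul (by positivity),
      ← ENNReal.ofReal_add (Finset.prod_nonneg fun i _ => gaussianPDFReal_nonneg _ v (x i))
        (Finset.prod_nonneg fun i _ => gaussianPDFReal_nonneg _ v (x i))]
    exact ENNReal.ofReal_le_ofReal (hpoint x)
  have hmain : ENNReal.ofReal (2 * c) * P A ≤ Q A + Q' A := by
    rw [hPd, hQd, hQ'd, withDensity_apply _ hA, withDensity_apply _ hA,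
      withDensity_apply _ hA, ← lintegral_const_mul _ hg0, ← lintegral_add_left hgμ]
    exact lintegral_mono fun x => hpointE x
  rw [hstep1]
  rw [← hstep2, ← two_mul] at hmain
  have h2 : ENNReal.ofReal (2 * c) = 2 * ENNReal.ofReal c := by
    rw [ENNReal.ofReal_mul (by norm_num)]
    norm_num
  rw [h2, mul_assoc] at hmain
  exact (ENNReal.mul_le_mul_iff_right (by norm_num) (by norm_num)).mp hmain

end Aux

/-- Gaussian shift inequality for symmetric convex sets (Anderson-type
bound). Let `Z` have i.i.d. `N(0, σ²)` coordinates in `ℝ^k` (modeled by the product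
Gaussian measure `P`), let `μ ∈ ℝ^k`, and let `A` be a Borel convex set symmetric about
the origin. Then `P(Z + μ ∈ A) ≥ exp(−‖μ‖₂²/(2σ²)) · P(Z ∈ A)`; in particular, the same
shift bound holds for `ℓ₂`- and `ℓ∞`-balls of any radius `δ > 0`. -/
theorem gaussian_shift_symmetric_convex (k : ℕ) (hk : 1 ≤ k) (σ : ℝ) (hσ : 0 < σ)
    (μ : Fin k → ℝ) :
    (∀ A : Set (Fin k → ℝ), MeasurableSet A → Convex ℝ A → A = -A →
      ENNReal.ofReal (Real.exp (-(∑ i, (μ i) ^ 2) / (2 * σ ^ 2)))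
          * (Measure.pi fun _ : Fin k => gaussianReal 0 (σ ^ 2).toNNReal) A
        ≤ (Measure.pi fun _ : Fin k => gaussianReal 0 (σ ^ 2).toNNReal)
            {z | z + μ ∈ A}) ∧
    (∀ δ : ℝ, 0 < δ →
      ENNReal.ofReal (Real.exp (-(∑ i, (μ i) ^ 2) / (2 * σ ^ 2)))
          * (Measure.pi fun _ : Fin k => gaussianReal 0 (σ ^ 2).toNNReal)
              {z | Real.sqrt (∑ i, (z i) ^ 2) ≤ δ}
        ≤ (Measure.pi fun _ : Fin k => gaussianReal 0 (σ ^ 2).toNNReal)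
            {z | Real.sqrt (∑ i, (z i - μ i) ^ 2) ≤ δ}) ∧
    (∀ δ : ℝ, 0 < δ →
      ENNReal.ofReal (Real.exp (-(∑ i, (μ i) ^ 2) / (2 * σ ^ 2)))
          * (Measure.pi fun _ : Fin k => gaussianReal 0 (σ ^ 2).toNNReal)
              {z | ∀ i, |z i| ≤ δ}
        ≤ (Measure.pi fun _ : Fin k => gaussianReal 0 (σ ^ 2).toNNReal)
            {z | ∀ i, |z i - μ i| ≤ δ}) := by
  refine ⟨fun A hA _ hsym => gauss_shift_main hσ μ A hA hsym, ?_, ?_⟩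
  · intro δ hδ
    have hm : Measurable fun z : Fin k → ℝ => Real.sqrt (∑ i, (z i) ^ 2) :=
      Real.continuous_sqrt.measurable.comp
        (Finset.measurable_sum _ fun i _ => (measurable_pi_apply i).pow_const 2)
    have hmeas : MeasurableSet {z : Fin k → ℝ | Real.sqrt (∑ i, (z i) ^ 2) ≤ δ} :=
      measurableSet_le hm measurable_const
    have hsym : {z : Fin k → ℝ | Real.sqrt (∑ i, (z i) ^ 2) ≤ δ}
        = -{z : Fin k → ℝ | Real.sqrt (∑ i, (z i) ^ 2) ≤ δ} := by
      ext z
      simp [Set.mem_neg, neg_sq]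
    have h := gauss_shift_main hσ (-μ) _ hmeas hsym
    have hsum : (∑ i, ((-μ : Fin k → ℝ) i) ^ 2) = ∑ i, (μ i) ^ 2 := by
      simp [neg_sq]
    rw [hsum] at h
    have hset : {z : Fin k → ℝ | z + -μ ∈
          {z : Fin k → ℝ | Real.sqrt (∑ i, (z i) ^ 2) ≤ δ}}
        = {z : Fin k → ℝ | Real.sqrt (∑ i, (z i - μ i) ^ 2) ≤ δ} := by
      ext z
      simp [sub_eq_add_neg]
    rw [hset] at h
    exact h
  · intro δ hδ
    have hmeas : MeasurableSet {z : Fin k → ℝ | ∀ i, |z i| ≤ δ} := by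
      have : {z : Fin k → ℝ | ∀ i, |z i| ≤ δ} = ⋂ i, {z : Fin k → ℝ | |z i| ≤ δ} := by
        ext z; simp
      rw [this]
      exact MeasurableSet.iInter fun i =>
        measurableSet_le (measurable_pi_apply i).abs measurable_const
    have hsym : {z : Fin k → ℝ | ∀ i, |z i| ≤ δ}
        = -{z : Fin k → ℝ | ∀ i, |z i| ≤ δ} := by
      ext z
      simp [Set.mem_neg, abs_neg]
    have h := gauss_shift_main hσ (-μ) _ hmeas hsym
    have hsum : (∑ i, ((-μ : Fin k → ℝ) i) ^ 2) = ∑ i, (μ i) ^ 2 := by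
      simp [neg_sq]
    rw [hsum] at h
    have hset : {z : Fin k → ℝ | z + -μ ∈ {z : Fin k → ℝ | ∀ i, |z i| ≤ δ}}
        = {z : Fin k → ℝ | ∀ i, |z i - μ i| ≤ δ} := by
      ext z
      simp [sub_eq_add_neg]
    rw [hset] at h
    exact h
end

section
/- Scale-mixture representation of the half-Cauchy distribution (used to derive the Gibbs sampler steps for the variance parameters). For every σ > 0, ∫₀^∞ [ ν^{−1/2} Γ(1/2)^{−1} (σ²)^{−3/2} e^{−1/(ν σ²)} · 2σ ] · [ Γ(1/2)^{−1} ν^{−3/2} e^{−1/ν} ] dν = (2/π) (1 + σ²)^{−1}. Equivalently: if σ² | ν ~ Inverse-Gamma(1/2, 1/ν) and ν ~ Inverse-Gamma(1/2, 1), then marginally σ has the half-Cauchy C⁺(0,1) distribution. -/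
open MeasureTheory Real

/-- Scale-mixture representation of the half-Cauchy distribution.
If `σ² | ν ~ InverseGamma(1/2, 1/ν)` and `ν ~ InverseGamma(1/2, 1)`, then marginally `σ`
has the half-Cauchy `C⁺(0,1)` density: for every `σ > 0`,
`∫₀^∞ [ν^{−1/2} Γ(1/2)⁻¹ (σ²)^{−3/2} e^{−1/(νσ²)} · 2σ] · [Γ(1/2)⁻¹ ν^{−3/2} e^{−1/ν}] dν
  = (2/π)(1 + σ²)⁻¹`. -/
theorem halfCauchy_scale_mixture (σ : ℝ) (hσ : 0 < σ) :
    ∫ ν in Set.Ioi (0 : ℝ),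
        (ν ^ (-(1 : ℝ) / 2) * (Real.Gamma (1 / 2))⁻¹ * (σ ^ 2) ^ (-(3 : ℝ) / 2)
            * Real.exp (-(1 / (ν * σ ^ 2))) * (2 * σ))
          * ((Real.Gamma (1 / 2))⁻¹ * ν ^ (-(3 : ℝ) / 2) * Real.exp (-(1 / ν)))
      = (2 / Real.pi) * (1 + σ ^ 2)⁻¹ := by
  have hσ2 : (0:ℝ) < σ ^ 2 := by positivity
  set c : ℝ := 1 / σ ^ 2 + 1 with hc
  have hc0 : (0:ℝ) < c := by positivity
  set K : ℝ := (Real.Gamma (1 / 2))⁻¹ * (σ ^ 2) ^ (-(3 : ℝ) / 2) * (2 * σ)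
    * (Real.Gamma (1 / 2))⁻¹ with hK
  -- Step 1: the integrand equals K * (ν^(-2) * exp(-(c * ν⁻¹))) on Ioi 0
  have h1 : ∫ ν in Set.Ioi (0 : ℝ),
        (ν ^ (-(1 : ℝ) / 2) * (Real.Gamma (1 / 2))⁻¹ * (σ ^ 2) ^ (-(3 : ℝ) / 2)
            * Real.exp (-(1 / (ν * σ ^ 2))) * (2 * σ))
          * ((Real.Gamma (1 / 2))⁻¹ * ν ^ (-(3 : ℝ) / 2) * Real.exp (-(1 / ν)))
      = ∫ ν in Set.Ioi (0 : ℝ),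
          K * ((|(-1 : ℝ)| * ν ^ ((-1 : ℝ) - 1)) * Real.exp (-(c * ν ^ (-1 : ℝ)))) := by
    refine setIntegral_congr_fun measurableSet_Ioi (fun ν hν => ?_)
    have hν0 : (0:ℝ) < ν := hν
    have hpow : ν ^ (-(1 : ℝ) / 2) * ν ^ (-(3 : ℝ) / 2) = ν ^ ((-1 : ℝ) - 1) := by
      rw [← Real.rpow_add hν0]; norm_num
    have hexp : Real.exp (-(1 / (ν * σ ^ 2))) * Real.exp (-(1 / ν))
        = Real.exp (-(c * ν ^ (-1 : ℝ))) := by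
      rw [← Real.exp_add, Real.rpow_neg_one, hc]
      congr 1
      have hσ' : σ ≠ 0 := hσ.ne'
      field_simp
      ring
    calc (ν ^ (-(1 : ℝ) / 2) * (Real.Gamma (1 / 2))⁻¹ * (σ ^ 2) ^ (-(3 : ℝ) / 2)
            * Real.exp (-(1 / (ν * σ ^ 2))) * (2 * σ))
          * ((Real.Gamma (1 / 2))⁻¹ * ν ^ (-(3 : ℝ) / 2) * Real.exp (-(1 / ν)))
        = K * ((ν ^ (-(1 : ℝ) / 2) * ν ^ (-(3 : ℝ) / 2))
            * (Real.exp (-(1 / (ν * σ ^ 2))) * Real.exp (-(1 / ν)))) := by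
          rw [hK]; ring
      _ = K * ((|(-1 : ℝ)| * ν ^ ((-1 : ℝ) - 1)) * Real.exp (-(c * ν ^ (-1 : ℝ)))) := by
          rw [hpow, hexp, abs_neg, abs_one, one_mul]
  -- Step 2: substitution y = ν⁻¹
  have h2 : ∫ ν in Set.Ioi (0 : ℝ),
        (|(-1 : ℝ)| * ν ^ ((-1 : ℝ) - 1)) * Real.exp (-(c * ν ^ (-1 : ℝ)))
      = ∫ y in Set.Ioi (0 : ℝ), Real.exp (-(c * y)) := by
    have := MeasureTheory.integral_comp_rpow_Ioi (fun y => Real.exp (-(c * y)))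
      (p := -1) (by norm_num)
    simpa [smul_eq_mul] using this
  have h3 : ∫ y in Set.Ioi (0 : ℝ), Real.exp (-(c * y)) = c⁻¹ := by
    have := Real.integral_rpow_mul_exp_neg_mul_Ioi (a := 1) one_pos hc0
    rw [show ∫ y in Set.Ioi (0 : ℝ), Real.exp (-(c * y))
        = ∫ t in Set.Ioi (0 : ℝ), t ^ ((1:ℝ) - 1) * Real.exp (-(c * t)) from
      setIntegral_congr_fun measurableSet_Ioi (fun t ht => by
        rw [show (1:ℝ) - 1 = 0 by norm_num, Real.rpow_zero, one_mul]), this]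
    simp [Real.Gamma_one]
  rw [h1, integral_const_mul, h2, h3]
  -- Step 3: arithmetic
  have hΓ : Real.Gamma (1 / 2) = Real.sqrt π := Real.Gamma_one_half_eq
  have hsq : (Real.sqrt π)⁻¹ * (Real.sqrt π)⁻¹ = π⁻¹ := by
    rw [← mul_inv, Real.mul_self_sqrt Real.pi_pos.le]
  have hσpow : (σ ^ 2) ^ (-(3 : ℝ) / 2) = (σ ^ 3)⁻¹ := by
    rw [← Real.rpow_natCast σ 2, ← Real.rpow_mul hσ.le]
    norm_num
  rw [hK, hΓ, hσpow, hc]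
  have hπ : Real.pi ≠ 0 := Real.pi_ne_zero
  have hσ' : σ ≠ 0 := hσ.ne'
  field_simp
  ring_nf
  rw [Real.sq_sqrt Real.pi_pos.le]
end
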